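/- Let θ ∈ ℝ^d be nonzero with optimal action a⋆ := θ/‖θ‖, let h ∈ ℝ^d be a hint with ‖h‖ = 1 and ⟨h, θ⟩ ≥ −‖θ‖/4, and let p ∈ ℝ^d be an orthogonal perturbation of h, i.e. ⟨p, h⟩ = 0, with ‖p‖ < 1/8. Then the instantaneous regret of the perturbed action a := Perturb(h, p) = (h + p)/√(1 + ‖p‖²) is bounded as ⟨a⋆ − a, θ⟩ ≤ 12·‖P_h^⊥ θ‖²/‖θ‖ + 3·‖θ‖·‖p‖². -/

import Mathlib

/-- Projection of `u` onto the span of `v`. -/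
noncomputable def projOn {d : ℕ} (v u : EuclideanSpace ℝ (Fin d)) : EuclideanSpace ℝ (Fin d) :=
  ((inner ℝ u v : ℝ) / ‖v‖ ^ 2) • v

/-- Projection of `u` onto the orthogonal complement of `v`. -/
noncomputable def projPerp {d : ℕ} (v u : EuclideanSpace ℝ (Fin d)) : EuclideanSpace ℝ (Fin d) :=
  u - projOn v u

/-- The perturbed action `(h + p)/√(1 + ‖p‖²)`. -/
noncomputable def perturb {d : ℕ} (h p : EuclideanSpace ℝ (Fin d)) : EuclideanSpace ℝ (Fin d) :=
  (Real.sqrt (1 + ‖p‖ ^ 2))⁻¹ • (h + p)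

open RealInnerProductSpace

section InnerProductSpace

variable {E : Type*} [NormedAddCommGroup E] [InnerProductSpace ℝ E]

lemma norm_sub_inner_smul_sq_of_norm_eq_one {h : E} (hh : ‖h‖ = 1) (u : E) :
    ‖u - ⟪u, h⟫ • h‖ ^ 2 = ‖u‖ ^ 2 - ⟪u, h⟫ ^ 2 := by
  rw [norm_sub_sq_real, real_inner_smul_right, norm_smul, hh, Real.norm_eq_abs, mul_one, sq_abs]
  ring

lemma abs_inner_le_norm_mul_norm_sub_smul {h p : E} (hph : ⟪p, h⟫ = 0) (u : E) (a : ℝ) :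
    |⟪p, u⟫| ≤ ‖p‖ * ‖u - a • h‖ := by
  have hu : ⟪p, u - a • h⟫ = ⟪p, u⟫ := by
    rw [inner_sub_right, real_inner_smul_right, hph, mul_zero, sub_zero]
  exact hu ▸ abs_real_inner_le_norm p _

end InnerProductSpace

lemma inv_sqrt_one_add_le_one {x : ℝ} (hx : 0 ≤ x) : (√(1 + x))⁻¹ ≤ 1 :=
  inv_le_one_of_one_le₀ (Real.one_le_sqrt.mpr (by linarith))

lemma one_sub_inv_sqrt_one_add_le {x : ℝ} (hx : 0 ≤ x) : 1 - (√(1 + x))⁻¹ ≤ x / 2 := by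
  have hR : 1 ≤ √(1 + x) := Real.one_le_sqrt.mpr (by linarith)
  have hR' : √(1 + x) ≤ 1 + x / 2 := Real.sqrt_one_add_le (by linarith)
  calc 1 - (√(1 + x))⁻¹ = (√(1 + x) - 1) / √(1 + x) := by field_simp
    _ ≤ √(1 + x) - 1 := div_le_self (by linarith) hR
    _ ≤ x / 2 := by linarith

/-- With `t = ‖θ‖`, `c = ⟪h, θ⟫`, `W = ‖P_h^⊥ θ‖`, `q = ⟪p, θ⟫`, `s = ‖p‖` and `r = (√(1 + s²))⁻¹`,
the regret is `t - r (c + q)`. -/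
lemma regret_scalar_bound {t c W q s r : ℝ} (ht : 0 < t) (hc : -t / 4 ≤ c)
    (hW : c ^ 2 + W ^ 2 = t ^ 2) (hq : |q| ≤ s * W) (hr0 : 0 ≤ r) (hr1 : r ≤ 1)
    (hr : 1 - r ≤ s ^ 2 / 2) :
    t - r * (c + q) ≤ 12 * W ^ 2 / t + 3 * t * s ^ 2 := by
  have hct : c ≤ t := abs_le_of_sq_le_sq' (by nlinarith) ht.le |>.2
  -- `t - c = W² / (t + c)` and `t + c ≥ 3t/4`
  have hmain : t - c ≤ 4 / 3 * W ^ 2 / t := by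
    rw [le_div_iff₀ ht]; nlinarith
  have hscale : (1 - r) * c ≤ s ^ 2 / 2 * t := by
    rcases le_total 0 c with h0 | h0 <;> nlinarith [sq_nonneg s]
  have hrq : -(r * q) ≤ s * W := by
    nlinarith [neg_abs_le q, abs_nonneg q]
  have hamgm : s * W ≤ W ^ 2 / (2 * t) + s ^ 2 * t / 2 := by
    rw [div_add_div _ _ (by positivity) two_ne_zero, le_div_iff₀ (by positivity)]
    nlinarith [sq_nonneg (W - s * t)]
  calc t - r * (c + q) = (t - c) + (1 - r) * c - r * q := by ring
    _ ≤ 4 / 3 * W ^ 2 / t + s ^ 2 / 2 * t + (W ^ 2 / (2 * t) + s ^ 2 * t / 2) := by linarith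
    _ ≤ 12 * W ^ 2 / t + 3 * t * s ^ 2 := by
      field_simp; nlinarith [sq_nonneg W, sq_nonneg s]

lemma projPerp_eq_sub_inner_smul {d : ℕ} {h : EuclideanSpace ℝ (Fin d)} (hh : ‖h‖ = 1)
    (u : EuclideanSpace ℝ (Fin d)) : projPerp h u = u - ⟪u, h⟫ • h := by
  simp [projPerp, projOn, hh]

lemma inner_perturb_left {d : ℕ} (h p u : EuclideanSpace ℝ (Fin d)) :
    ⟪perturb h p, u⟫ = (√(1 + ‖p‖ ^ 2))⁻¹ * (⟪h, u⟫ + ⟪p, u⟫) := by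
  rw [perturb, real_inner_smul_left, inner_add_left]

theorem regret_perturb_general {d : ℕ} (θ h p : EuclideanSpace ℝ (Fin d))
    (hθ : θ ≠ 0) (hh : ‖h‖ = 1) (hcorr : (inner ℝ h θ : ℝ) ≥ -‖θ‖ / 4)
    (hph : (inner ℝ p h : ℝ) = 0) :
    (inner ℝ (‖θ‖⁻¹ • θ - perturb h p) θ : ℝ) ≤
      12 * ‖projPerp h θ‖ ^ 2 / ‖θ‖ + 3 * ‖θ‖ * ‖p‖ ^ 2 := by
  have ht : 0 < ‖θ‖ := norm_pos_iff.mpr hθ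
  have hW : ⟪h, θ⟫ ^ 2 + ‖projPerp h θ‖ ^ 2 = ‖θ‖ ^ 2 := by
    rw [projPerp_eq_sub_inner_smul hh, norm_sub_inner_smul_sq_of_norm_eq_one hh,
      real_inner_comm]
    ring
  have hq : |⟪p, θ⟫| ≤ ‖p‖ * ‖projPerp h θ‖ := by
    rw [projPerp_eq_sub_inner_smul hh]
    exact abs_inner_le_norm_mul_norm_sub_smul hph θ _
  have hLHS : ⟪‖θ‖⁻¹ • θ - perturb h p, θ⟫ =
      ‖θ‖ - (√(1 + ‖p‖ ^ 2))⁻¹ * (⟪h, θ⟫ + ⟪p, θ⟫) := by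
    rw [inner_sub_left, real_inner_smul_left, real_inner_self_eq_norm_sq, inner_perturb_left]
    field_simp
  rw [hLHS]
  exact regret_scalar_bound ht hcorr hW hq (by positivity)
    (inv_sqrt_one_add_le_one (by positivity)) (one_sub_inv_sqrt_one_add_le (by positivity))

/-- the instantaneous regret of the perturbed action satisfies
`⟨a⋆ - a, θ⟩ ≤ 12·‖P_h^⊥ θ‖²/‖θ‖ + 3·‖θ‖·‖p‖²`. -/
theorem regret_perturb {d : ℕ} (hd : 1 ≤ d) (θ h p : EuclideanSpace ℝ (Fin d))
    (hθ : θ ≠ 0) (hh : ‖h‖ = 1) (hcorr : (inner ℝ h θ : ℝ) ≥ -‖θ‖ / 4)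
    (hph : (inner ℝ p h : ℝ) = 0) (hpn : ‖p‖ < 1 / 8) :
    (inner ℝ (‖θ‖⁻¹ • θ - perturb h p) θ : ℝ) ≤
      12 * ‖projPerp h θ‖ ^ 2 / ‖θ‖ + 3 * ‖θ‖ * ‖p‖ ^ 2 :=
  regret_perturb_general θ h p hθ hh hcorr hph
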